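/- arXiv:1609.01218 — 11 statements merged into one kernel-verified Lean document; each statement's English description precedes it below -/
import Mathlib

section
/- If f : ℝ → ℂ is a positive definite function, then for all x, y ∈ ℝ and any α ∈ ℂ with |α| = 1, |α·f(x) − f(y)|² ≤ 2·f(0)·Re(f(0) − α·f(x−y)). -/
open Complex ComplexOrder Finset

/-- `f : ℝ → ℂ` is positive definite: for every `N`, points `x : Fin N → ℝ` and
complex numbers `z : Fin N → ℂ`, the double sum `∑ f(x k - x j) z k conj (z j)`
is a nonnegative (real) complex number. -/
def IsPosDefFn (f : ℝ → ℂ) : Prop :=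
  ∀ (N : ℕ) (x : Fin N → ℝ) (z : Fin N → ℂ),
    0 ≤ ∑ k : Fin N, ∑ j : Fin N, f (x k - x j) * z k * (starRingEnd ℂ) (z j)

lemma posdef_f0 (f : ℝ → ℂ) (hf : IsPosDefFn f) : 0 ≤ f 0 := by
  have h := hf 1 (fun _ => 0) (fun _ => 1)
  simpa using h

lemma posdef_herm (f : ℝ → ℂ) (hf : IsPosDefFn f) (u : ℝ) :
    f (-u) = (starRingEnd ℂ) (f u) := by
  have h0 := posdef_f0 f hf
  rw [Complex.le_def] at h0
  have h0im : (f 0).im = 0 := by simpa using h0.2.symm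
  have key : ∀ z : ℂ, (0:ℝ) =
      (f 0).im + (-((f u).re * z.im) + (f u).im * z.re) +
      ((f (-u)).re * z.im + (f (-u)).im * z.re +
        (-(((f 0).re * z.re - (f 0).im * z.im) * z.im) +
          ((f 0).re * z.im + (f 0).im * z.re) * z.re)) := by
    intro z
    have h := hf 2 ![u, 0] ![1, z]
    rw [Complex.le_def] at h
    have h2 := h.2
    simpa [Fin.sum_univ_two, Complex.add_im, Complex.mul_im, Complex.mul_re] using h2
  have k1 := key 1
  have kI := key Complex.I
  simp [Complex.I_re, Complex.I_im, h0im] at k1 kI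
  apply Complex.ext
  · simp [Complex.conj_re]; linarith
  · simp [Complex.conj_im]; linarith

theorem generalized_krein (f : ℝ → ℂ) (hf : IsPosDefFn f)
    (x y : ℝ) (α : ℂ) (hα : ‖α‖ = 1) :
    ‖α * f x - f y‖ ^ 2 ≤ 2 * (f 0).re * (f 0 - α * f (x - y)).re := by
  have h0 := posdef_f0 f hf
  rw [Complex.le_def] at h0
  have h0re : 0 ≤ (f 0).re := by simpa using h0.1
  have h0im : (f 0).im = 0 := by simpa using h0.2.symm
  have hn : α.re ^ 2 + α.im ^ 2 = 1 := by
    have h := Complex.sq_norm α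
    rw [hα] at h
    simpa [Complex.normSq_apply, sq] using h.symm
  have e1 : f (y - x) = (starRingEnd ℂ) (f (x - y)) := by
    simpa [neg_sub] using posdef_herm f hf (x - y)
  have e2 : f (-x) = (starRingEnd ℂ) (f x) := posdef_herm f hf x
  have e3 : f (-y) = (starRingEnd ℂ) (f y) := posdef_herm f hf y
  have key : ∀ (t : ℝ) (w : ℂ),
      0 ≤ 2*((f 0).re - (α * f (x-y)).re) * t^2
          + (2*((α * f x - f y) * (starRingEnd ℂ) w).re) * t
          + (f 0).re * Complex.normSq w := by
    intro t w
    have h := hf 3 ![x, y, 0] ![α * (t:ℂ), -(t:ℂ), w]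
    rw [Complex.le_def] at h
    have h1 := h.1
    have hG : 2*((f 0).re - (α * f (x-y)).re) * t^2
          + (2*((α * f x - f y) * (starRingEnd ℂ) w).re) * t
          + (f 0).re * Complex.normSq w
        = (∑ k : Fin 3, ∑ j : Fin 3,
            f (![x, y, 0] k - ![x, y, 0] j) * ![α * (t:ℂ), -(t:ℂ), w] k *
              (starRingEnd ℂ) (![α * (t:ℂ), -(t:ℂ), w] j)).re := by
      simp [Fin.sum_univ_three, e1, e2, e3, Complex.add_re, Complex.mul_re,
        Complex.mul_im, Complex.normSq_apply, Complex.sub_re, Complex.sub_im]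
      ring_nf
      linear_combination (-(f 0).re * t^2) * hn
    rw [hG]
    simpa using h1
  set A := α * f x - f y with hA
  set c := (f 0).re - (α * f (x-y)).re with hc
  have hc0 : 0 ≤ c := by
    have := key 1 0
    simpa using this
  have hre : (f 0 - α * f (x - y)).re = c := by simp [hc]
  rw [hre]
  by_cases hA0 : A = 0
  · rw [hA0]
    simpa using mul_nonneg (mul_nonneg (by norm_num) h0re) hc0
  · have habs : ‖A‖ ≠ 0 := by simpa using hA0
    set w : ℂ := -(A / ((‖A‖ : ℝ) : ℂ)) with hw
    have hw1 : Complex.normSq w = 1 := by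
      rw [hw]
      rw [Complex.normSq_neg, Complex.normSq_div]
      simp [Complex.normSq_ofReal, Complex.normSq_eq_norm_sq]
      exact hA0
    have hw2 : (A * (starRingEnd ℂ) w).re = -(‖A‖) := by
      have : A * (starRingEnd ℂ) w = -((‖A‖ : ℝ) : ℂ) := by
        rw [hw]
        rw [map_neg, map_div₀, Complex.conj_ofReal, mul_neg, ← mul_div_assoc,
          Complex.mul_conj, Complex.normSq_eq_norm_sq]
        push_cast
        field_simp
      rw [this]
      simp
    have quad : ∀ s : ℝ, 0 ≤ (2*c) * (s*s) + (-(2*‖A‖)) * s + (f 0).re := by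
      intro s
      have h := key s w
      rw [hw1, hw2] at h
      nlinarith [h]
    have hd := discrim_le_zero quad
    rw [discrim] at hd
    nlinarith [hd, Complex.sq_norm A]
end

section
/- Let f : ℝ → ℂ be a positive definite function, T ∈ ℝ, and α ∈ ℂ with |α| = 1. If f(T) = α·f(0), then f(x + T) = α·f(x) for all x ∈ ℝ. -/
open Complex ComplexOrder Finset

/-- A positive definite function satisfies `f (-y) = conj (f y)`. -/
theorem pdf_conj (f : ℝ → ℂ) (hf : IsPosDefFn f) (y : ℝ) : f (-y) = (starRingEnd ℂ) (f y) := by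
  have h0 : 0 ≤ f 0 := by simpa using hf 1 ![0] ![1]
  have h1 := hf 2 ![y, 0] ![1, 1]
  have h2 := hf 2 ![y, 0] ![1, Complex.I]
  simp [Fin.sum_univ_two] at h1 h2
  rw [Complex.le_def] at h0 h1 h2
  simp [Complex.add_im, Complex.mul_im] at h0 h1 h2
  apply Complex.ext
  · simp [Complex.conj_re]; linarith [h2.2, h0.2]
  · simp [Complex.conj_im]; linarith [h1.2, h0.2]

theorem quasi_periodicity (f : ℝ → ℂ) (hf : IsPosDefFn f)
    (T : ℝ) (α : ℂ) (hα : ‖α‖ = 1) (hT : f T = α * f 0) :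
    ∀ x : ℝ, f (x + T) = α * f x := by
  intro x
  have h0 : 0 ≤ f 0 := by simpa using hf 1 ![0] ![1]
  rw [Complex.le_def] at h0
  have hf0 : f 0 = ((f 0).re : ℂ) := by
    apply Complex.ext <;> simp [← h0.2]
  set r : ℝ := (f 0).re with hr
  have hr0 : 0 ≤ r := h0.1
  set D : ℂ := f (x + T) - α * f x with hD
  have hfxT : f (x + T) = D + α * f x := by ring
  by_contra hne
  have hDne : D ≠ 0 := fun h => hne (by rw [hD] at h; linear_combination h)
  have hnsq : 0 < Complex.normSq D := Complex.normSq_pos.2 hDne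
  set t : ℝ := 1 / (r + 1) with ht
  have h := hf 3 ![x+T, x, 0] ![1, -α, -(t:ℂ)*D]
  simp only [Fin.sum_univ_three, Matrix.cons_val_zero, Matrix.cons_val_one, Matrix.head_cons,
    Matrix.cons_val_two, Matrix.tail_cons, sub_self, sub_zero, zero_sub, map_one, map_neg,
    map_mul, Complex.conj_ofReal, mul_one, one_mul] at h
  rw [show x+T-x = T from by ring, show x-(x+T) = -T from by ring] at h
  have hαc : α * (starRingEnd ℂ) α = 1 := by
    rw [Complex.mul_conj, Complex.normSq_eq_norm_sq, hα]; norm_num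
  have hDc : D * (starRingEnd ℂ) D = (Complex.normSq D : ℂ) := Complex.mul_conj D
  have key : (0:ℂ) ≤ (((t^2 * r - 2*t) * Complex.normSq D : ℝ) : ℂ) := by
    refine le_of_le_of_eq h ?_
    rw [pdf_conj f hf T, pdf_conj f hf x, pdf_conj f hf (x+T), hT, hfxT, hf0]
    simp only [map_add, map_mul, Complex.conj_ofReal]
    push_cast
    linear_combination (-(r:ℂ)) * hαc + ((t:ℂ)^2*(r:ℂ) - 2*(t:ℂ)) * hDc
  rw [Complex.zero_le_real] at key
  have ht0 : 0 < t := by rw [ht]; positivity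
  have htr : t * (r + 1) = 1 := by rw [ht]; field_simp
  nlinarith [mul_pos ht0 hnsq, mul_pos (mul_pos ht0 ht0) hnsq]
end

section
/- Let f : ℝ → ℂ be a positive definite function and T ∈ ℝ. If f(T) = −f(0), then f(x + 2T) = f(x) for all x ∈ ℝ. -/
open Complex ComplexOrder Finset

theorem periodicity_of_neg (f : ℝ → ℂ) (hf : IsPosDefFn f)
    (T : ℝ) (hT : f T = -f 0) :
    ∀ x : ℝ, f (x + 2 * T) = f x := by
  have h0 : 0 ≤ f 0 := by simpa using hf 1 (fun _ => 0) (fun _ => 1)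
  rw [Complex.le_def] at h0
  have h0im : (f 0).im = 0 := by simpa using h0.2.symm
  have h0re : 0 ≤ (f 0).re := by simpa using h0.1
  have hsym : ∀ y : ℝ, f (-y) = (starRingEnd ℂ) (f y) := by
    intro y
    have h1 := hf 2 ![y, 0] ![1, 1]
    have h2 := hf 2 ![y, 0] ![1, Complex.I]
    simp [Fin.sum_univ_two] at h1 h2
    rw [Complex.le_def] at h1 h2
    have e1 := h1.2
    have e2 := h2.2
    simp [Complex.add_im, Complex.mul_im, Complex.I_re, Complex.I_im, h0im] at e1 e2
    apply Complex.ext <;> simp [Complex.conj_re, Complex.conj_im] <;> linarith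
  have key : ∀ x : ℝ, f (x + T) = -f x := by
    intro x
    set t : ℝ := 1 / ((f 0).re + 1) with ht
    clear_value t
    have hden : (0:ℝ) < (f 0).re + 1 := by linarith
    have htpos : 0 < t := by rw [ht]; positivity
    have h1t : (f 0).re * t < 1 := by
      rw [ht, mul_one_div, div_lt_one hden]; linarith
    have h3 := hf 3 ![0, T, -x] ![1, 1, -(t:ℂ) * (f x + f (x + T))]
    simp [Fin.sum_univ_three] at h3
    rw [show (-x - T : ℝ) = -(x + T) by ring, show (T + x : ℝ) = x + T by ring] at h3
    rw [hsym x, hsym (x + T), hsym T, hT] at h3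
    rw [Complex.le_def] at h3
    have hre := h3.1
    simp [Complex.add_re, Complex.mul_re, Complex.mul_im, Complex.add_im,
      Complex.neg_re, Complex.neg_im, Complex.ofReal_re, Complex.ofReal_im,
      Complex.conj_re, Complex.conj_im, h0im] at hre
    have hre' : 0 ≤ ((f 0).re * t^2 - 2*t) *
        (((f x).re + (f (x+T)).re)^2 + ((f x).im + (f (x+T)).im)^2) := by
      ring_nf; ring_nf at hre; linarith
    have hneg : (f 0).re * t^2 - 2*t < 0 := by nlinarith
    have hns : 0 ≤ ((f x).re + (f (x+T)).re)^2 + ((f x).im + (f (x+T)).im)^2 := by positivity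
    have hS : ((f x).re + (f (x+T)).re)^2 + ((f x).im + (f (x+T)).im)^2 = 0 := by
      by_contra hne
      have hSpos : 0 < ((f x).re + (f (x+T)).re)^2 + ((f x).im + (f (x+T)).im)^2 :=
        lt_of_le_of_ne hns (Ne.symm hne)
      linarith [mul_neg_of_neg_of_pos hneg hSpos]
    have hA0 : (f x).re + (f (x+T)).re = 0 := by
      nlinarith [sq_nonneg ((f x).re + (f (x+T)).re), sq_nonneg ((f x).im + (f (x+T)).im)]
    have hB0 : (f x).im + (f (x+T)).im = 0 := by
      nlinarith [sq_nonneg ((f x).re + (f (x+T)).re), sq_nonneg ((f x).im + (f (x+T)).im)]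
    apply Complex.ext <;> simp [Complex.neg_re, Complex.neg_im] <;> linarith
  intro x
  have h1 := key x
  have h2 := key (x + T)
  rw [show x + 2 * T = (x + T) + T by ring, h2, h1, neg_neg]
end

section
/- If u : ℝ → ℝ is a real-valued positive definite function with u(0) = 1, then for all x ∈ ℝ, 1 − u(2x) ≤ 2·(1 − u(x)²). -/
open Complex ComplexOrder Finset

/-- `u : ℝ → ℝ` is positive definite: for every `N`, points `x : Fin N → ℝ` and
complex numbers `z : Fin N → ℂ`, the double sum `∑ u(x k - x j) z k conj (z j)`
is a nonnegative (real) complex number. -/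
def IsPosDefFnR (u : ℝ → ℝ) : Prop :=
  ∀ (N : ℕ) (x : Fin N → ℝ) (z : Fin N → ℂ),
    0 ≤ ∑ k : Fin N, ∑ j : Fin N, (u (x k - x j) : ℂ) * z k * (starRingEnd ℂ) (z j)

lemma isPosDefFnR_even (u : ℝ → ℝ) (hu : IsPosDefFnR u) (y : ℝ) : u (-y) = u y := by
  have h := hu 2 ![0, y] ![1, Complex.I]
  simp [Fin.sum_univ_two, Complex.le_def] at h
  linarith [h.2]

theorem linnik_refined_step (u : ℝ → ℝ) (hu : IsPosDefFnR u) (h0 : u 0 = 1)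
    (x : ℝ) : 1 - u (2 * x) ≤ 2 * (1 - u x ^ 2) := by
  have he : ∀ y, u (-y) = u y := isPosDefFnR_even u hu
  have h := hu 3 ![0, x, 2 * x] ![1, -(2 * u x : ℝ), 1]
  simp [Fin.sum_univ_three, Complex.le_def, h0] at h
  have hxx : x - 2 * x = -x := by ring
  have hyy : 2 * x - x = x := by ring
  rw [hxx, hyy, he x, he (2 * x)] at h
  nlinarith [h]
end

section
/- If u : ℝ → ℝ is a real-valued positive definite function with u(0) = 1, then for every m ∈ ℕ and all x ∈ ℝ, 1 − u(2^m·x) ≤ 4^m·(1 − u(x)). -/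
open Complex ComplexOrder Finset

lemma pd_even (u : ℝ → ℝ) (hu : IsPosDefFnR u) (t : ℝ) : u (-t) = u t := by
  have h := hu 2 ![0, t] ![1, Complex.I]
  rw [Complex.le_def] at h
  have him := h.2
  simp [Fin.sum_univ_two, Complex.ext_iff, Complex.add_im, Complex.mul_im] at him
  linarith

lemma pd_double (u : ℝ → ℝ) (hu : IsPosDefFnR u) (h0 : u 0 = 1) (t : ℝ) :
    1 - u (2 * t) ≤ 4 * (1 - u t) := by
  have heven := pd_even u hu
  have h := hu 3 ![0, t, 2 * t] ![1, -2, 1]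
  rw [Complex.le_def] at h
  have hre := h.1
  have e1 : (0 : ℝ) - t = -t := by ring
  have e2 : (0 : ℝ) - 2 * t = -(2 * t) := by ring
  have e3 : t - 2 * t = -t := by ring
  have e4 : (2 : ℝ) * t - t = t := by ring
  simp only [Fin.sum_univ_three, Matrix.cons_val_zero, Matrix.cons_val_one, Matrix.head_cons,
    Matrix.cons_val_two, Matrix.tail_cons, sub_self, sub_zero, e1, e2, e3, e4, heven, h0,
    map_one, map_neg, map_ofNat] at hre
  have : (0:ℝ) ≤ 6 - 8 * u t + 2 * u (2 * t) := by
    have := hre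
    push_cast at this
    simpa using by
      convert this using 1
      simp [Complex.add_re, Complex.mul_re]
      ring_nf
      simp [Complex.mul_re]
  linarith

theorem linnik_iterated (u : ℝ → ℝ) (hu : IsPosDefFnR u) (h0 : u 0 = 1)
    (m : ℕ) (x : ℝ) : 1 - u (2 ^ m * x) ≤ 4 ^ m * (1 - u x) := by
  induction m with
  | zero => simp
  | succ n ih =>
      have h1 : 1 - u (2 * (2 ^ n * x)) ≤ 4 * (1 - u (2 ^ n * x)) :=
        pd_double u hu h0 (2 ^ n * x)
      have h2 : (4:ℝ) * (1 - u (2 ^ n * x)) ≤ 4 * (4 ^ n * (1 - u x)) := by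
        linarith
      have e : (2:ℝ) ^ (n+1) * x = 2 * (2 ^ n * x) := by ring
      rw [e, pow_succ]
      linarith
end

section
/- For every odd n ≥ 1 and all real numbers s₁,…,s_n, cos²(s₁ + ⋯ + s_n) ≤ n·∑_{k=1}^{n} cos²(s_k). -/
open Real Finset

lemma abs_sin_add_le (a b : ℝ) : |Real.sin (a + b)| ≤ |Real.cos a| + |Real.cos b| := by
  rw [Real.sin_add]
  calc |Real.sin a * Real.cos b + Real.cos a * Real.sin b|
      ≤ |Real.sin a * Real.cos b| + |Real.cos a * Real.sin b| := abs_add_le _ _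
    _ ≤ |Real.cos b| + |Real.cos a| := by
        rw [abs_mul, abs_mul]
        gcongr
        · exact mul_le_of_le_one_left (abs_nonneg _) (Real.abs_sin_le_one a)
        · exact mul_le_of_le_one_right (abs_nonneg _) (Real.abs_sin_le_one b)
    _ = |Real.cos a| + |Real.cos b| := add_comm _ _

lemma list_key : ∀ m : ℕ, ∀ l : List ℝ, l.length = 2 * m + 1 →
    |Real.cos l.sum| ≤ (l.map (fun x => |Real.cos x|)).sum := by
  intro m
  induction m with
  | zero =>
    rintro (_ | ⟨a, (_ | ⟨b, l⟩)⟩) h <;> simp_all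
  | succ m ih =>
    rintro (_ | ⟨a, (_ | ⟨b, l⟩)⟩) h <;> simp_all
    have hl : l.length = 2 * m + 1 := by omega
    have h1 := ih l hl
    have h2 : |Real.cos (a + (b + l.sum))| ≤ |Real.cos a| + |Real.cos b| + |Real.cos l.sum| := by
      have : a + (b + l.sum) = (a + b) + l.sum := by ring
      rw [this, Real.cos_add]
      calc |Real.cos (a+b) * Real.cos l.sum - Real.sin (a+b) * Real.sin l.sum|
          ≤ |Real.cos (a+b) * Real.cos l.sum| + |Real.sin (a+b) * Real.sin l.sum| :=
            abs_sub _ _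
        _ ≤ |Real.sin (a+b)| + |Real.cos l.sum| := by
            rw [abs_mul, abs_mul]
            have := Real.abs_cos_le_one (a+b)
            have := Real.abs_sin_le_one l.sum
            have := abs_nonneg (Real.cos l.sum)
            have := abs_nonneg (Real.sin (a+b))
            rw [add_comm]
            gcongr
            · exact mul_le_of_le_one_right (abs_nonneg _) (Real.abs_sin_le_one l.sum)
            · exact mul_le_of_le_one_left (abs_nonneg _) (Real.abs_cos_le_one (a+b))
        _ ≤ (|Real.cos a| + |Real.cos b|) + |Real.cos l.sum| := by
            gcongr; exact abs_sin_add_le a b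
        _ = |Real.cos a| + |Real.cos b| + |Real.cos l.sum| := by ring
    calc |Real.cos (a + (b + l.sum))| ≤ |Real.cos a| + |Real.cos b| + |Real.cos l.sum| := h2
      _ ≤ |Real.cos a| + (|Real.cos b| + (l.map (fun x => |Real.cos x|)).sum) := by
          rw [← add_assoc]; gcongr

theorem cos_sq_sum_le_cos_odd (n : ℕ) (hn : 1 ≤ n) (hodd : Odd n)
    (s : Fin n → ℝ) :
    Real.cos (∑ k, s k) ^ 2 ≤ n * ∑ k, Real.cos (s k) ^ 2 := by
  obtain ⟨m, hm⟩ := hodd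
  have hlist : |Real.cos (∑ k, s k)| ≤ ∑ k, |Real.cos (s k)| := by
    have h := list_key m (List.ofFn s) (by simp [hm])
    simpa [List.map_ofFn, List.sum_ofFn, Function.comp] using h
  have h1 : Real.cos (∑ k, s k) ^ 2 ≤ (∑ k, |Real.cos (s k)|) ^ 2 := by
    rw [← sq_abs]
    exact pow_le_pow_left₀ (abs_nonneg _) hlist 2
  have h2 : (∑ k, |Real.cos (s k)|) ^ 2 ≤ n * ∑ k, |Real.cos (s k)| ^ 2 := by
    simpa using sq_sum_le_card_mul_sum_sq (s := Finset.univ) (f := fun k => |Real.cos (s k)|)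
  calc Real.cos (∑ k, s k) ^ 2 ≤ (∑ k, |Real.cos (s k)|) ^ 2 := h1
    _ ≤ n * ∑ k, |Real.cos (s k)| ^ 2 := h2
    _ = n * ∑ k, Real.cos (s k) ^ 2 := by simp [sq_abs]
end

section
/- Let u : ℝ → ℝ be a continuous real-valued positive definite function. Then for every n ≥ 1 and all x₁,…,x_n ∈ ℝ, u(0) − u(x₁ + ⋯ + x_n) ≤ n·∑_{k=1}^{n} (u(0) − u(x_k)). -/
open Complex ComplexOrder Finset
open scoped RealInnerProductSpace

lemma even_of_posdef {u : ℝ → ℝ} (hu : IsPosDefFnR u) (a : ℝ) : u (-a) = u a := by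
  have h := hu 2 ![a, 0] ![1, Complex.I]
  rw [Complex.le_def] at h
  have him := h.2
  simp [Fin.sum_univ_two, Complex.ext_iff, Complex.add_im, Complex.mul_im] at him
  linarith [him]

lemma gram_psd {u : ℝ → ℝ} (hu : IsPosDefFnR u) {N : ℕ} (s : Fin N → ℝ) :
    (Matrix.of (fun i j => u (s i - s j))).PosSemidef := by
  refine Matrix.PosSemidef.of_dotProduct_mulVec_nonneg ?_ ?_
  · ext i j
    simp only [Matrix.conjTranspose_apply, Matrix.of_apply, star_trivial]
    rw [← even_of_posdef hu (s j - s i)]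
    ring_nf
  · intro z
    have h := hu N s (fun k => (z k : ℂ))
    have : ∑ k : Fin N, ∑ j : Fin N, (u (s k - s j) : ℂ) * (z k : ℂ) * (starRingEnd ℂ) (z j)
        = ((∑ k : Fin N, ∑ j : Fin N, u (s k - s j) * z k * z j : ℝ) : ℂ) := by
      push_cast
      simp
    rw [this, Complex.zero_le_real] at h
    simpa [dotProduct, Matrix.mulVec, Finset.mul_sum, mul_assoc, mul_comm, mul_left_comm] using h

theorem multipoint_inequality (u : ℝ → ℝ) (hc : Continuous u)
    (hu : IsPosDefFnR u) (n : ℕ) (hn : 1 ≤ n) (x : Fin n → ℝ) :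
    u 0 - u (∑ k, x k) ≤ n * ∑ k, (u 0 - u (x k)) := by
  classical
  set x' : ℕ → ℝ := fun k => if h : k < n then x ⟨k, h⟩ else 0 with hx'
  set s : Fin (n + 1) → ℝ := fun i => ∑ k ∈ Finset.range i, x' k with hs
  set M := Matrix.of (fun i j => u (s i - s j)) with hM
  have hMpsd : M.PosSemidef := gram_psd hu s
  obtain ⟨B, hBsym, hBB⟩ : ∃ B : Matrix (Fin (n + 1)) (Fin (n + 1)) ℝ, B.IsHermitian ∧ B * B = M := by
    open scoped MatrixOrder in
    exact ⟨CFC.sqrt M, by simpa using (CFC.sqrt_nonneg M).1, CFC.sqrt_mul_sqrt_self M hMpsd.nonneg⟩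
  set v : Fin (n + 1) → EuclideanSpace ℝ (Fin (n + 1)) := fun i => WithLp.toLp 2 (fun k => B k i) with hv
  have hvv : ∀ i j, ⟪v i, v j⟫ = u (s i - s j) := by
    intro i j
    have h1 : ⟪v i, v j⟫ = ∑ k, B k i * B k j := by
      simp [PiLp.inner_apply, RCLike.inner_apply, hv, mul_comm]
    have h2 : ∀ k, B k i = B i k := fun k => by
      have := hBsym.apply i k
      simpa using this
    calc ⟪v i, v j⟫ = ∑ k, B i k * B k j := by rw [h1]; exact Finset.sum_congr rfl (fun k _ => by rw [← h2 k])
      _ = (B * B) i j := (Matrix.mul_apply).symm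
      _ = u (s i - s j) := by rw [hBB]; rfl
  have hnorm : ∀ i j, ‖v i - v j‖ ^ 2 = 2 * u 0 - 2 * u (s i - s j) := by
    intro i j
    rw [norm_sub_sq_real, ← real_inner_self_eq_norm_sq, ← real_inner_self_eq_norm_sq,
      hvv i i, hvv j j, hvv i j, sub_self, sub_self]
    ring
  -- vectors indexed by ℕ
  set w : ℕ → EuclideanSpace ℝ (Fin (n + 1)) := fun m => v ⟨min m n, by omega⟩ with hw
  have htel : ∑ k ∈ Finset.range n, (w (k + 1) - w k) = w n - w 0 :=
    Finset.sum_range_sub w n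
  -- step norms
  have hstep : ∀ k ∈ Finset.range n, ‖w (k + 1) - w k‖ ^ 2 = 2 * u 0 - 2 * u (x' k) := by
    intro k hk
    rw [Finset.mem_range] at hk
    have e1 : w (k + 1) = v ⟨k + 1, by omega⟩ :=
      congrArg v (Fin.ext (show min (k + 1) n = k + 1 by omega))
    have e2 : w k = v ⟨k, by omega⟩ :=
      congrArg v (Fin.ext (show min k n = k by omega))
    rw [e1, e2, hnorm]
    have : s ⟨k + 1, by omega⟩ - s ⟨k, by omega⟩ = x' k := by
      simp only [hs]
      rw [Finset.sum_range_succ]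
      ring
    rw [this]
  -- endpoint norm
  have hS : s ⟨n, by omega⟩ - s ⟨0, by omega⟩ = ∑ k, x k := by
    simp only [hs]
    rw [Finset.sum_range_zero, sub_zero]
    rw [Finset.sum_range]
    exact Finset.sum_congr rfl (fun k _ => by simp [hx', k.isLt])
  have hend : ‖w n - w 0‖ ^ 2 = 2 * u 0 - 2 * u (∑ k, x k) := by
    have e1 : w n = v ⟨n, by omega⟩ :=
      congrArg v (Fin.ext (show min n n = n by omega))
    have e2 : w 0 = v ⟨0, by omega⟩ :=
      congrArg v (Fin.ext (show min 0 n = 0 by omega))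
    rw [e1, e2, hnorm, hS]
  -- Cauchy–Schwarz chain
  have h1 : ‖w n - w 0‖ ≤ ∑ k ∈ Finset.range n, ‖w (k + 1) - w k‖ := by
    rw [← htel]
    exact norm_sum_le _ _
  have h2 : (∑ k ∈ Finset.range n, ‖w (k + 1) - w k‖) ^ 2
      ≤ (n : ℝ) * ∑ k ∈ Finset.range n, ‖w (k + 1) - w k‖ ^ 2 := by
    have := Finset.sum_mul_sq_le_sq_mul_sq (Finset.range n) (fun _ => (1 : ℝ))
      (fun k => ‖w (k + 1) - w k‖)
    simpa using this
  have h3 : ‖w n - w 0‖ ^ 2 ≤ (n : ℝ) * ∑ k ∈ Finset.range n, ‖w (k + 1) - w k‖ ^ 2 :=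
    le_trans (by
      apply pow_le_pow_left₀ (norm_nonneg _) h1) h2
  rw [hend, Finset.sum_congr rfl hstep] at h3
  have hsum : ∑ k ∈ Finset.range n, (2 * u 0 - 2 * u (x' k))
      = 2 * ∑ k, (u 0 - u (x k)) := by
    rw [Finset.mul_sum, Finset.sum_range]
    exact Finset.sum_congr rfl (fun k _ => by simp [hx', k.isLt]; ring)
  rw [hsum] at h3
  nlinarith [h3]
end

section
/- Let f : ℝ → ℂ be a continuous positive definite function and let n ≥ 1 be odd. Then for all x₁,…,x_n, y₁,…,y_n ∈ ℝ, |f(x₁+⋯+x_n) − f(y₁+⋯+y_n)|² ≤ 2n·f(0)·∑_{k=1}^{n} (f(0) − Re f(x_k − y_k)) (Gorin's multipoint inequality). -/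
open Complex ComplexOrder Finset

variable {f : ℝ → ℂ}

lemma f0_nonneg (hf : IsPosDefFn f) : 0 ≤ f 0 := by
  have h := hf 1 (fun _ => 0) (fun _ => 1)
  simpa using h

lemma conj_eq (hf : IsPosDefFn f) (s : ℝ) : f (-s) = (starRingEnd ℂ) (f s) := by
  have h1 := hf 2 ![0, s] ![1, 1]
  have h2 := hf 2 ![0, s] ![1, Complex.I]
  have h0 := f0_nonneg hf
  rw [Complex.le_def] at h1 h2 h0
  simp [Fin.sum_univ_two, Complex.add_im, Complex.mul_im] at h1 h2 h0
  apply Complex.ext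
  · simpa using by linarith [h2.2, h0.2, h1.1]
  · simpa using by linarith [h1.2, h0.2]

lemma re_le (hf : IsPosDefFn f) (s : ℝ) : (f s).re ≤ (f 0).re := by
  have h := hf 2 ![0, s] ![1, -1]
  rw [Complex.le_def] at h
  simp [Fin.sum_univ_two, zero_sub, conj_eq hf] at h
  linarith [h.1]

lemma krein (hf : IsPosDefFn f) (a b : ℝ) :
    ‖f a - f b‖ ^ 2 ≤ 2 * (f 0).re * ((f 0).re - (f (a - b)).re) := by
  have h0 := (Complex.le_def.mp (f0_nonneg hf)).1
  by_cases hd : f a - f b = 0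
  · rw [hd]
    simp only [norm_zero]
    simp only [Complex.zero_re] at h0
    nlinarith [re_le hf (a - b)]
  · set d := f a - f b with hdef
    set D := ‖d‖ with hD
    have hDpos : 0 < D := norm_pos_iff.mpr hd
    set w : ℂ := -(starRingEnd ℂ) d / D with hw
    have hdd : d * (starRingEnd ℂ) d = (D:ℂ)^2 := by
      rw [Complex.mul_conj, hD]
      rw [← Complex.sq_norm]
      push_cast
      ring
    clear_value d D w
    have hwd : w * d = -(D:ℂ) := by
      rw [hw]
      field_simp
      linear_combination -hdd
    have hww : w * (starRingEnd ℂ) w = 1 := by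
      rw [hw]
      simp only [map_div₀, map_neg, Complex.conj_conj, Complex.conj_ofReal]
      field_simp
      linear_combination hdd
    have e1 : f (0 - a) = (starRingEnd ℂ) (f a) := by rw [zero_sub, conj_eq hf]
    have e2 : f (0 - b) = (starRingEnd ℂ) (f b) := by rw [zero_sub, conj_eq hf]
    have e3 : f (b - a) = (starRingEnd ℂ) (f (a - b)) := by rw [← neg_sub a b, conj_eq hf]
    have hre : f (a - b) + (starRingEnd ℂ) (f (a - b)) = 2 * ((f (a - b)).re : ℂ) := by
      rw [Complex.add_conj]; push_cast; ring
    have key : ∀ t : ℝ, 0 ≤ (f 0).re * (t * t) + (-(2 * D)) * t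
        + 2 * ((f 0).re - (f (a - b)).re) := by
      intro t
      have h := hf 3 ![0, a, b] ![(t : ℂ), w, -w]
      have hS : (∑ k : Fin 3, ∑ j : Fin 3,
          f (![0, a, b] k - ![0, a, b] j) * ![(t:ℂ), w, -w] k *
            (starRingEnd ℂ) (![(t:ℂ), w, -w] j))
          = (((f 0).re * (t * t) + (-(2 * D)) * t
              + 2 * ((f 0).re - (f (a - b)).re) : ℝ) : ℂ) := by
        have hf0 : f 0 = ((f 0).re : ℂ) := by
          apply Complex.ext <;>
            simp [((Complex.le_def.mp (f0_nonneg hf)).2).symm]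
        have hdef' : (starRingEnd ℂ) d = (starRingEnd ℂ) (f a) - (starRingEnd ℂ) (f b) := by
          rw [hdef, map_sub]
        have hwd' : (starRingEnd ℂ) w * (starRingEnd ℂ) d = -(D:ℂ) := by
          rw [← map_mul, hwd]
          simp
        simp only [Fin.sum_univ_three, Matrix.cons_val_zero, Matrix.cons_val_one,
          Matrix.head_cons, Matrix.cons_val_two, Matrix.tail_cons, sub_self, sub_zero,
          e1, e2, e3, map_neg, Complex.conj_ofReal]
        push_cast
        linear_combination (t:ℂ) * hwd + (t:ℂ) * hwd' +
          (2 * f 0 - f (a - b) - (starRingEnd ℂ) (f (a - b))) * hww - hre -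
          (t:ℂ) * (starRingEnd ℂ) w * hdef' - (t:ℂ) * w * hdef + ((t:ℂ)*(t:ℂ) + 2) * hf0
      rw [hS] at h
      exact Complex.zero_le_real.mp h
    have hd2 := discrim_le_zero key
    rw [discrim] at hd2
    show D ^ 2 ≤ _
    nlinarith [hd2]

theorem gorin_multipoint (f : ℝ → ℂ) (hc : Continuous f) (hf : IsPosDefFn f)
    (n : ℕ) (hn : 1 ≤ n) (hodd : Odd n) (x y : Fin n → ℝ) :
    ‖f (∑ k, x k) - f (∑ k, y k)‖ ^ 2 ≤
      2 * n * (f 0).re * ∑ k, ((f 0).re - (f (x k - y k)).re) := by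
  classical
  set X : ℕ → ℝ := fun k => if h : k < n then x ⟨k, h⟩ else 0 with hX
  set Y : ℕ → ℝ := fun k => if h : k < n then y ⟨k, h⟩ else 0 with hY
  set U : ℕ → ℝ := fun j => (∑ k ∈ Finset.range j, X k)
    + (∑ k ∈ Finset.range n, Y k) - (∑ k ∈ Finset.range j, Y k) with hU
  have hXx : ∀ k : Fin n, X (k : ℕ) = x k := fun k => by simp [hX, k.isLt]
  have hYy : ∀ k : Fin n, Y (k : ℕ) = y k := fun k => by simp [hY, k.isLt]
  have hUn : U n = ∑ k, x k := by
    simp only [hU, sub_self, add_sub_cancel_right]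
    rw [← Fin.sum_univ_eq_sum_range X n]
    exact Finset.sum_congr rfl fun k _ => hXx k
  have hU0 : U 0 = ∑ k, y k := by
    simp only [hU, Finset.range_zero, Finset.sum_empty, zero_add, sub_zero]
    rw [← Fin.sum_univ_eq_sum_range Y n]
    exact Finset.sum_congr rfl fun k _ => hYy k
  have hstep : ∀ j, U (j + 1) - U j = X j - Y j := by
    intro j
    simp [hU, Finset.sum_range_succ]
    ring
  have tel : f (U n) - f (U 0) = ∑ j ∈ Finset.range n, (f (U (j + 1)) - f (U j)) :=
    (Finset.sum_range_sub (fun j => f (U j)) n).symm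
  have A : ‖f (U n) - f (U 0)‖
      ≤ ∑ j ∈ Finset.range n, ‖f (U (j + 1)) - f (U j)‖ := by
    rw [tel]; exact norm_sum_le _ _
  have B : (∑ j ∈ Finset.range n, ‖f (U (j + 1)) - f (U j)‖) ^ 2
      ≤ n * ∑ j ∈ Finset.range n, ‖f (U (j + 1)) - f (U j)‖ ^ 2 := by
    simpa using sq_sum_le_card_mul_sum_sq
      (s := Finset.range n) (f := fun j => ‖f (U (j + 1)) - f (U j)‖)
  have C : ∑ j ∈ Finset.range n, ‖f (U (j + 1)) - f (U j)‖ ^ 2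
      ≤ ∑ j ∈ Finset.range n, 2 * (f 0).re * ((f 0).re - (f (X j - Y j)).re) := by
    refine Finset.sum_le_sum fun j _ => ?_
    have := krein hf (U (j + 1)) (U j)
    rwa [hstep j] at this
  have hsum : ∑ j ∈ Finset.range n, ((f 0).re - (f (X j - Y j)).re)
      = ∑ k, ((f 0).re - (f (x k - y k)).re) := by
    rw [← Fin.sum_univ_eq_sum_range (fun i => (f 0).re - (f (X i - Y i)).re) n]
    exact Finset.sum_congr rfl fun k _ => by rw [hXx k, hYy k]
  calc ‖f (∑ k, x k) - f (∑ k, y k)‖ ^ 2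
      = ‖f (U n) - f (U 0)‖ ^ 2 := by rw [hUn, hU0]
    _ ≤ (∑ j ∈ Finset.range n, ‖f (U (j + 1)) - f (U j)‖) ^ 2 := by
        apply pow_le_pow_left₀ (norm_nonneg _) A
    _ ≤ n * ∑ j ∈ Finset.range n, ‖f (U (j + 1)) - f (U j)‖ ^ 2 := B
    _ ≤ n * ∑ j ∈ Finset.range n, 2 * (f 0).re * ((f 0).re - (f (X j - Y j)).re) := by
        exact mul_le_mul_of_nonneg_left C (Nat.cast_nonneg n)
    _ = 2 * n * (f 0).re * ∑ j ∈ Finset.range n, ((f 0).re - (f (X j - Y j)).re) := by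
        rw [Finset.mul_sum, Finset.mul_sum]
        exact Finset.sum_congr rfl fun j _ => by ring
    _ = _ := by rw [hsum]
end

section
/- Let u : ℝ → ℝ be a continuous real-valued positive definite function and let n ≥ 1 be odd. Then for all x₁,…,x_n ∈ ℝ, u(0) + u(x₁ + ⋯ + x_n) ≤ n·∑_{k=1}^{n} (u(0) + u(x_k)). -/
open Complex ComplexOrder Finset

noncomputable section
namespace PDAux
variable (u : ℝ → ℝ)

lemma even_of_posdef (hu : IsPosDefFnR u) (a : ℝ) : u (-a) = u a := by
  have h := hu 2 ![0, a] ![1, Complex.I]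
  rw [Complex.le_def] at h
  have him := h.2
  simp [Fin.sum_univ_two, Complex.ext_iff] at him
  linarith


def Bf (f g : ℝ →₀ ℝ) : ℝ := f.sum fun y a => g.sum fun z b => a * b * u (y - z)

lemma Bf_self_nonneg (hu : IsPosDefFnR u) (f : ℝ →₀ ℝ) : 0 ≤ Bf u f f := by
  classical
  set s := f.support with hs
  set e : Fin s.card ≃ s := s.equivFin.symm with he
  have h := hu s.card (fun i => ((e i : ℝ))) (fun i => ((f (e i) : ℝ) : ℂ))
  have hcast : (∑ k : Fin s.card, ∑ j : Fin s.card,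
      (u ((e k : ℝ) - (e j : ℝ)) : ℂ) * (f (e k) : ℂ) * (starRingEnd ℂ) ((f (e j) : ℂ)))
      = ((∑ k : Fin s.card, ∑ j : Fin s.card,
        f (e k) * f (e j) * u ((e k : ℝ) - (e j : ℝ)) : ℝ) : ℂ) := by
    push_cast [Complex.conj_ofReal]
    congr 1; funext k; congr 1; funext j; ring
  rw [hcast] at h
  have hr : (0:ℝ) ≤ ∑ k : Fin s.card, ∑ j : Fin s.card,
      f (e k) * f (e j) * u ((e k : ℝ) - (e j : ℝ)) := by
    exact_mod_cast h
  have hq : Bf u f f = ∑ k : Fin s.card, ∑ j : Fin s.card,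
      f (e k) * f (e j) * u ((e k : ℝ) - (e j : ℝ)) := by
    unfold Bf
    rw [Finsupp.sum, ← Finset.sum_coe_sort f.support, ← Equiv.sum_comp e]
    refine Finset.sum_congr rfl fun k _ => ?_
    rw [Finsupp.sum, ← Finset.sum_coe_sort f.support, ← Equiv.sum_comp e]
  rw [hq]; exact hr

lemma Bf_single_single (y z a b : ℝ) :
    Bf u (Finsupp.single y a) (Finsupp.single z b) = a * b * u (y - z) := by
  unfold Bf
  rw [Finsupp.sum_single_index, Finsupp.sum_single_index]
  · simp
  · simp [Finsupp.sum]

lemma Bf_add_left (f₁ f₂ g : ℝ →₀ ℝ) : Bf u (f₁ + f₂) g = Bf u f₁ g + Bf u f₂ g := by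
  unfold Bf
  rw [Finsupp.sum_add_index'] <;> intros <;> simp [Finsupp.sum, add_mul, Finset.sum_add_distrib]

lemma Bf_add_right (f g₁ g₂ : ℝ →₀ ℝ) : Bf u f (g₁ + g₂) = Bf u f g₁ + Bf u f g₂ := by
  unfold Bf
  rw [← Finsupp.sum_add]
  congr 1; funext y a
  rw [Finsupp.sum_add_index'] <;> intros <;> simp [mul_add] <;> ring

lemma Bf_smul_left (t : ℝ) (f g : ℝ →₀ ℝ) : Bf u (t • f) g = t * Bf u f g := by
  unfold Bf
  rw [Finsupp.sum_smul_index']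
  · rw [Finsupp.mul_sum]
    congr 1; funext y a
    rw [Finsupp.mul_sum]; congr 1; funext z b; simp; ring
  · intro y; simp [Finsupp.sum]

lemma Bf_smul_right (t : ℝ) (f g : ℝ →₀ ℝ) : Bf u f (t • g) = t * Bf u f g := by
  unfold Bf
  rw [Finsupp.mul_sum]
  congr 1; funext y a
  rw [Finsupp.sum_smul_index']
  · rw [Finsupp.mul_sum]; congr 1; funext z b; simp; ring
  · intro z; simp

lemma Bf_neg_left (f g : ℝ →₀ ℝ) : Bf u (-f) g = - Bf u f g := by
  have := Bf_smul_left u (-1) f g; simpa using this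

lemma Bf_neg_right (f g : ℝ →₀ ℝ) : Bf u f (-g) = - Bf u f g := by
  have := Bf_smul_right u (-1) f g; simpa using this


lemma Bf_comm (hu : IsPosDefFnR u) (f g : ℝ →₀ ℝ) : Bf u f g = Bf u g f := by
  unfold Bf
  rw [Finsupp.sum_comm]
  congr 1; funext z b; congr 1; funext y a
  rw [← even_of_posdef u hu (y - z)]
  ring_nf

lemma Bf_cs (hu : IsPosDefFnR u) (f g : ℝ →₀ ℝ) :
    Bf u f g ^ 2 ≤ Bf u f f * Bf u g g := by
  have key : ∀ t : ℝ, 0 ≤ Bf u g g * (t * t) + (2 * Bf u f g) * t + Bf u f f := by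
    intro t
    have h0 := Bf_self_nonneg u hu (f + t • g)
    simp only [Bf_add_left, Bf_add_right, Bf_smul_left, Bf_smul_right] at h0
    rw [Bf_comm u hu g f] at h0
    nlinarith [h0]
  have hd := discrim_le_zero key
  rw [discrim] at hd
  nlinarith [hd]

def nn (f : ℝ →₀ ℝ) : ℝ := Real.sqrt (Bf u f f)

lemma nn_nonneg (f : ℝ →₀ ℝ) : 0 ≤ nn u f := Real.sqrt_nonneg _

lemma nn_sq (hu : IsPosDefFnR u) (f : ℝ →₀ ℝ) : nn u f ^ 2 = Bf u f f :=
  Real.sq_sqrt (Bf_self_nonneg u hu f)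

lemma nn_le_of_sq_le (hu : IsPosDefFnR u) {f : ℝ →₀ ℝ} {c : ℝ} (hc : 0 ≤ c)
    (h : Bf u f f ≤ c ^ 2) : nn u f ≤ c := by
  unfold nn
  calc Real.sqrt (Bf u f f) ≤ Real.sqrt (c ^ 2) := Real.sqrt_le_sqrt h
  _ = c := by rw [Real.sqrt_sq hc]

lemma Bf_le_nn_mul_nn (hu : IsPosDefFnR u) (f g : ℝ →₀ ℝ) :
    Bf u f g ≤ nn u f * nn u g := by
  calc Bf u f g ≤ |Bf u f g| := le_abs_self _
  _ = Real.sqrt (Bf u f g ^ 2) := (Real.sqrt_sq_eq_abs _).symm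
  _ ≤ Real.sqrt ((nn u f * nn u g) ^ 2) := by
      apply Real.sqrt_le_sqrt
      rw [mul_pow, nn_sq u hu f, nn_sq u hu g]
      exact Bf_cs u hu f g
  _ = nn u f * nn u g := Real.sqrt_sq (mul_nonneg (nn_nonneg u f) (nn_nonneg u g))

lemma nn_add_le (hu : IsPosDefFnR u) (f g : ℝ →₀ ℝ) : nn u (f + g) ≤ nn u f + nn u g := by
  apply nn_le_of_sq_le u hu (add_nonneg (nn_nonneg u f) (nn_nonneg u g))
  rw [Bf_add_left, Bf_add_right, Bf_add_right, Bf_comm u hu g f]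
  nlinarith [Bf_le_nn_mul_nn u hu f g, nn_sq u hu f, nn_sq u hu g]

lemma nn_neg (f : ℝ →₀ ℝ) : nn u (-f) = nn u f := by
  unfold nn; rw [Bf_neg_left, Bf_neg_right, neg_neg]

lemma nn_sub_le (hu : IsPosDefFnR u) (f g : ℝ →₀ ℝ) : nn u (f - g) ≤ nn u f + nn u g := by
  rw [sub_eq_add_neg]
  calc nn u (f + -g) ≤ nn u f + nn u (-g) := nn_add_le u hu f (-g)
  _ = nn u f + nn u g := by rw [nn_neg]

lemma nn_two_smul (f : ℝ →₀ ℝ) : nn u ((2:ℝ) • f) = 2 * nn u f := by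
  unfold nn
  rw [Bf_smul_left, Bf_smul_right, ← mul_assoc]
  rw [show (2:ℝ)*2 = 4 by norm_num, show (4:ℝ) * Bf u f f = 2^2 * Bf u f f by norm_num,
    Real.sqrt_mul (by positivity), Real.sqrt_sq (by norm_num)]


lemma Bf_sub_left (f₁ f₂ g : ℝ →₀ ℝ) : Bf u (f₁ - f₂) g = Bf u f₁ g - Bf u f₂ g := by
  rw [sub_eq_add_neg, Bf_add_left, Bf_neg_left]; ring

lemma Bf_sub_right (f g₁ g₂ : ℝ →₀ ℝ) : Bf u f (g₁ - g₂) = Bf u f g₁ - Bf u f g₂ := by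
  rw [sub_eq_add_neg, Bf_add_right, Bf_neg_right]; ring

def sgl (y : ℝ) : ℝ →₀ ℝ := Finsupp.single y 1
def Vv (p : ℝ) : ℝ →₀ ℝ := sgl p + sgl (-p)
def Ww (p : ℝ) : ℝ →₀ ℝ := sgl p - sgl (-p)
def Tt (c : ℝ) (f : ℝ →₀ ℝ) : ℝ →₀ ℝ := Finsupp.mapDomain (·+c) f

lemma Bf_Tt (c : ℝ) (f g : ℝ →₀ ℝ) : Bf u (Tt c f) (Tt c g) = Bf u f g := by
  unfold Bf Tt
  rw [Finsupp.sum_mapDomain_index_inj (add_left_injective c)]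
  congr 1; funext y a
  rw [Finsupp.sum_mapDomain_index_inj (add_left_injective c)]
  congr 1; funext z b
  congr 2; ring

lemma nn_Tt (c : ℝ) (f : ℝ →₀ ℝ) : nn u (Tt c f) = nn u f := by
  unfold nn; rw [Bf_Tt]

lemma Q_Vv (hu : IsPosDefFnR u) (p : ℝ) : Bf u (Vv p) (Vv p) = 2 * (u 0 + u (2*p)) := by
  have hue := even_of_posdef u hu
  simp only [Vv, sgl, Bf_add_left, Bf_add_right, Bf_single_single, one_mul]
  have h1 : p - p = 0 := by ring
  have h2 : p - -p = 2*p := by ring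
  have h3 : -p - p = -(2*p) := by ring
  have h4 : -p - -p = 0 := by ring
  rw [h1, h2, h3, h4, hue (2*p)]
  ring

lemma Tt_sgl (c y : ℝ) : Tt c (sgl y) = sgl (y + c) := by
  unfold Tt sgl; rw [Finsupp.mapDomain_single]

lemma Tt_Vv (c p : ℝ) : Tt c (Vv p) = sgl (p+c) + sgl (-p+c) := by
  unfold Vv Tt
  rw [Finsupp.mapDomain_add]
  rw [show Finsupp.mapDomain (·+c) (sgl p) = Tt c (sgl p) from rfl,
    show Finsupp.mapDomain (·+c) (sgl (-p)) = Tt c (sgl (-p)) from rfl, Tt_sgl, Tt_sgl]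

lemma Tt_Ww (c p : ℝ) : Tt c (Ww p) = sgl (p+c) - sgl (-p+c) := by
  unfold Ww Tt
  rw [show Finsupp.mapDomain (·+c) (sgl p - sgl (-p))
      = Finsupp.mapDomain.addMonoidHom (·+c) (sgl p - sgl (-p)) from rfl, map_sub]
  rw [show Finsupp.mapDomain.addMonoidHom (α := ℝ) (M := ℝ) (·+c) (sgl p) = Tt c (sgl p) from rfl,
    show Finsupp.mapDomain.addMonoidHom (α := ℝ) (M := ℝ) (·+c) (sgl (-p)) = Tt c (sgl (-p)) from rfl,
    Tt_sgl, Tt_sgl]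

-- identity I1: 2 cos(r+s) = cos r * 2cos s + sin s * ... (vector form)
lemma idV (r s : ℝ) : (2:ℝ) • Vv (r+s) =
    (Tt s (Vv r) + Tt (-s) (Vv r)) + (Tt r (Ww s) - Tt (-r) (Ww s)) := by
  simp only [Tt_Vv, Tt_Ww]
  unfold Vv
  rw [show s + r = r + s by ring, show -s + -r = -(r+s) by ring,
    show -r + -s = -(r+s) by ring, show s + -r = -r + s by ring,
    show -s + r = r + -s by ring]
  unfold sgl
  module

-- identity I2: 2 sin(p+q) = sin p 2cos q + sin q 2 cos p
lemma idW (p q : ℝ) : (2:ℝ) • Ww (p+q) =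
    (Tt q (Ww p) + Tt (-q) (Ww p)) + (Tt p (Ww q) + Tt (-p) (Ww q)) := by
  simp only [Tt_Ww]
  unfold Ww
  rw [show q + p = p + q by ring, show -q + -p = -(p+q) by ring,
    show -p + -q = -(p+q) by ring, show q + -p = -p + q by ring,
    show -q + p = p + -q by ring]
  unfold sgl
  module

-- bound: ‖2 sin p · 2 cos q‖ ≤ 2 ‖2 cos q‖
lemma bndX (hu : IsPosDefFnR u) (p q : ℝ) :
    nn u (Tt q (Ww p) + Tt (-q) (Ww p)) ≤ 2 * nn u (Vv q) := by
  have hue := even_of_posdef u hu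
  apply nn_le_of_sq_le u hu (by nlinarith [nn_nonneg u (Vv q)])
  have hY := Bf_self_nonneg u hu (Tt p (Vv q) + Tt (-p) (Vv q))
  have key : Bf u (Tt q (Ww p) + Tt (-q) (Ww p)) (Tt q (Ww p) + Tt (-q) (Ww p))
      + Bf u (Tt p (Vv q) + Tt (-p) (Vv q)) (Tt p (Vv q) + Tt (-p) (Vv q))
      = 4 * Bf u (Vv q) (Vv q) := by
    simp only [Tt_Vv, Tt_Ww]
    simp only [Vv, sgl]
    simp only [Bf_add_left, Bf_add_right, Bf_sub_left, Bf_sub_right, Bf_single_single, one_mul]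
    ring_nf
  nlinarith [key, hY, nn_sq u hu (Vv q)]


lemma nn_W_add (hu : IsPosDefFnR u) (p q : ℝ) :
    nn u (Ww (p+q)) ≤ nn u (Vv p) + nn u (Vv q) := by
  have h2 : nn u ((2:ℝ) • Ww (p+q)) = 2 * nn u (Ww (p+q)) := nn_two_smul u _
  rw [idW] at h2
  have t1 := nn_add_le u hu (Tt q (Ww p) + Tt (-q) (Ww p)) (Tt p (Ww q) + Tt (-p) (Ww q))
  have b1 := bndX u hu p q
  have b2 := bndX u hu q p
  linarith

lemma nn_V_add (hu : IsPosDefFnR u) (r s : ℝ) :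
    nn u (Vv (r+s)) ≤ nn u (Vv r) + nn u (Ww s) := by
  have h2 : nn u ((2:ℝ) • Vv (r+s)) = 2 * nn u (Vv (r+s)) := nn_two_smul u _
  rw [idV] at h2
  have t1 := nn_add_le u hu (Tt s (Vv r) + Tt (-s) (Vv r)) (Tt r (Ww s) - Tt (-r) (Ww s))
  have t2 := nn_add_le u hu (Tt s (Vv r)) (Tt (-s) (Vv r))
  have t3 := nn_sub_le u hu (Tt r (Ww s)) (Tt (-r) (Ww s))
  have e1 := nn_Tt u s (Vv r); have e2 := nn_Tt u (-s) (Vv r)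
  have e3 := nn_Tt u r (Ww s); have e4 := nn_Tt u (-r) (Ww s)
  linarith

lemma step (hu : IsPosDefFnR u) (r a b : ℝ) :
    nn u (Vv (r + (a+b))) ≤ nn u (Vv r) + nn u (Vv a) + nn u (Vv b) := by
  have h1 := nn_V_add u hu r (a+b)
  have h2 := nn_W_add u hu a b
  linarith

lemma list_ind (hu : IsPosDefFnR u) :
    ∀ (m : ℕ) (l : List ℝ), l.length = 2*m+1 →
      nn u (Vv l.sum) ≤ (l.map (fun p => nn u (Vv p))).sum := by
  intro m
  induction m with
  | zero =>
    intro l hl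
    simp only [Nat.mul_zero, Nat.zero_add] at hl
    obtain ⟨a, rfl⟩ := List.length_eq_one_iff.mp hl
    simp
  | succ m ih =>
    intro l hl
    match l with
    | a :: b :: t =>
      have ht : t.length = 2*m+1 := by simp at hl; omega
      have hsum : (a :: b :: t).sum = t.sum + (a+b) := by simp; ring
      rw [hsum]
      have h1 := step u hu t.sum a b
      have h2 := ih t ht
      simp only [List.map_cons, List.sum_cons]
      linarith

end PDAux


theorem multipoint_plus_odd (u : ℝ → ℝ) (hc : Continuous u)
    (hu : IsPosDefFnR u) (n : ℕ) (hn : 1 ≤ n) (hodd : Odd n) (x : Fin n → ℝ) :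
    u 0 + u (∑ k, x k) ≤ n * ∑ k, (u 0 + u (x k)) := by
  classical
  obtain ⟨m, hm⟩ := hodd
  set l := List.ofFn (fun k : Fin n => x k / 2) with hldef
  have hl : l.length = 2*m+1 := by simp [hldef, hm]
  have key := PDAux.list_ind u hu m l hl
  have hls : l.sum = (∑ k, x k)/2 := by
    rw [hldef, List.sum_ofFn, Finset.sum_div]
  have hlm : (l.map (fun p => PDAux.nn u (PDAux.Vv p))).sum
      = ∑ k, PDAux.nn u (PDAux.Vv (x k / 2)) := by
    rw [hldef, List.map_ofFn, List.sum_ofFn]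
    rfl
  rw [hls, hlm] at key
  set A := PDAux.nn u (PDAux.Vv ((∑ k, x k)/2)) with hA
  set a : Fin n → ℝ := fun k => PDAux.nn u (PDAux.Vv (x k / 2)) with ha
  have hA2 : A^2 = 2*(u 0 + u (∑ k, x k)) := by
    rw [hA, PDAux.nn_sq u hu, PDAux.Q_Vv u hu, show 2*((∑ k, x k)/2) = ∑ k, x k by ring]
  have ha2 : ∀ k, a k ^ 2 = 2*(u 0 + u (x k)) := by
    intro k
    rw [ha]
    simp only
    rw [PDAux.nn_sq u hu, PDAux.Q_Vv u hu, show 2*(x k/2) = x k by ring]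
  have hAn : 0 ≤ A := PDAux.nn_nonneg u _
  have hsa : 0 ≤ ∑ k, a k := Finset.sum_nonneg fun k _ => PDAux.nn_nonneg u _
  have hsq : A^2 ≤ (∑ k, a k)^2 := by
    apply pow_le_pow_left₀ hAn key
  have cheb : (∑ k, a k)^2 ≤ (n:ℝ) * ∑ k, a k ^ 2 := by
    have := sq_sum_le_card_mul_sum_sq (s := (Finset.univ : Finset (Fin n))) (f := a)
    simpa using this
  have hsum2 : ∑ k, a k ^ 2 = 2 * ∑ k, (u 0 + u (x k)) := by
    rw [Finset.mul_sum]
    exact Finset.sum_congr rfl fun k _ => ha2 k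
  rw [hsum2] at cheb
  rw [hA2] at hsq
  nlinarith [cheb, hsq]
end
end

section
/- Let f : ℝ → ℂ be a continuous positive definite function and let n ≥ 1 be odd. Then for all x₁,…,x_n, y₁,…,y_n ∈ ℝ, |f(x₁+⋯+x_n) + f(y₁+⋯+y_n)|² ≤ 2n·f(0)·∑_{k=1}^{n} (f(0) + Re f(x_k − y_k)). -/
open Complex ComplexOrder Finset

lemma double_sum_bound {ι κ : Type*} [Fintype ι] [Fintype κ] (g : ι → ι → ℝ)
    (hsym : ∀ k j, g k j = g j k)
    (hpos : ∀ v : ι → ℝ, 0 ≤ ∑ k, ∑ j, g k j * v k * v j)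
    (w : κ → ι → ℝ) :
    (∑ k, ∑ j, g k j * (∑ i, w i k) * (∑ i, w i j)) ≤
      (Fintype.card κ : ℝ) * ∑ i, ∑ k, ∑ j, g k j * w i k * w i j := by
  set B : κ → κ → ℝ := fun i i' => ∑ k, ∑ j, g k j * w i k * w i' j with hB
  have hBsym : ∀ i i', B i i' = B i' i := by
    intro i i'
    rw [hB]
    dsimp only
    rw [Finset.sum_comm]
    exact Finset.sum_congr rfl fun k _ => Finset.sum_congr rfl fun j _ => by
      rw [hsym]; ring
  have hpair : ∀ i i', 2 * B i i' ≤ B i i + B i' i' := by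
    intro i i'
    have h := hpos (fun k => w i k - w i' k)
    have hexp : (∑ k, ∑ j, g k j * (w i k - w i' k) * (w i j - w i' j))
        = B i i - B i i' - B i' i + B i' i' := by
      rw [hB]
      dsimp only
      rw [← Finset.sum_sub_distrib, ← Finset.sum_sub_distrib, ← Finset.sum_add_distrib]
      refine Finset.sum_congr rfl fun k _ => ?_
      rw [← Finset.sum_sub_distrib, ← Finset.sum_sub_distrib, ← Finset.sum_add_distrib]
      exact Finset.sum_congr rfl fun j _ => by ring
    rw [hexp] at h
    have hs := hBsym i i'
    linarith
  have hexpand : (∑ k, ∑ j, g k j * (∑ i, w i k) * (∑ i, w i j)) = ∑ i, ∑ i', B i i' := by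
    have h1 : ∀ k j, g k j * (∑ i, w i k) * (∑ i', w i' j)
        = ∑ i, ∑ i', g k j * w i k * w i' j := by
      intro k j
      rw [mul_assoc, Finset.sum_mul_sum, Finset.mul_sum]
      refine Finset.sum_congr rfl fun i _ => ?_
      rw [Finset.mul_sum]
      exact Finset.sum_congr rfl fun i' _ => by ring
    calc (∑ k, ∑ j, g k j * (∑ i, w i k) * (∑ i, w i j))
        = ∑ k, ∑ j, ∑ i, ∑ i', g k j * w i k * w i' j := by
          exact Finset.sum_congr rfl fun k _ => Finset.sum_congr rfl fun j _ => h1 k j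
      _ = ∑ k, ∑ i, ∑ j, ∑ i', g k j * w i k * w i' j := by
          exact Finset.sum_congr rfl fun k _ => Finset.sum_comm
      _ = ∑ i, ∑ k, ∑ j, ∑ i', g k j * w i k * w i' j := Finset.sum_comm
      _ = ∑ i, ∑ k, ∑ i', ∑ j, g k j * w i k * w i' j := by
          exact Finset.sum_congr rfl fun i _ => Finset.sum_congr rfl fun k _ => Finset.sum_comm
      _ = ∑ i, ∑ i', ∑ k, ∑ j, g k j * w i k * w i' j := by
          exact Finset.sum_congr rfl fun i _ => Finset.sum_comm
      _ = ∑ i, ∑ i', B i i' := rfl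
  rw [hexpand]
  calc (∑ i, ∑ i', B i i') ≤ ∑ i, ∑ i' : κ, (B i i + B i' i') / 2 := by
        refine Finset.sum_le_sum fun i _ => Finset.sum_le_sum fun i' _ => ?_
        linarith [hpair i i']
    _ = (Fintype.card κ : ℝ) * ∑ i, B i i := by
        simp only [add_div, Finset.sum_add_distrib, Finset.sum_const, Finset.card_univ,
          nsmul_eq_mul, Finset.sum_div, Finset.mul_sum]
        rw [← Finset.sum_add_distrib]
        exact Finset.sum_congr rfl fun i _ => by ring

lemma key_lemma (f : ℝ → ℂ) (hf : IsPosDefFn f)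
    (hsym : ∀ t : ℝ, f (-t) = (starRingEnd ℂ) (f t))
    (n : ℕ) (hn : 1 ≤ n) (hodd : Odd n) (t : Fin n → ℝ) :
    (f 0).re + (f (∑ k, t k)).re ≤ n * ∑ k, ((f 0).re + (f (t k)).re) := by
  classical
  haveI : NeZero n := ⟨by omega⟩
  set a : Fin (n+1) → ℝ := fun k => ∑ j : Fin n, if (j:ℕ) < (k:ℕ) then t j else 0 with ha
  have ha0 : a 0 = 0 := by simp [ha]
  have halast : a (Fin.last n) = ∑ k, t k := by
    rw [ha]
    exact Finset.sum_congr rfl fun j _ => by simp [j.isLt]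
  have hstep : ∀ i : Fin n, a i.succ - a i.castSucc = t i := by
    intro i
    rw [ha]
    dsimp only
    rw [← Finset.sum_sub_distrib]
    rw [show (∑ j : Fin n, ((if (j:ℕ) < (i.succ:ℕ) then t j else 0)
        - (if (j:ℕ) < (i.castSucc:ℕ) then t j else 0)))
        = ∑ j : Fin n, (if j = i then t j else 0) from
      Finset.sum_congr rfl fun j _ => by
        simp only [Fin.val_succ, Fin.coe_castSucc, Fin.ext_iff]
        by_cases h1 : (j:ℕ) < (i:ℕ)
        · rw [if_pos (by omega), if_pos h1, if_neg (by omega)]; ring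
        · by_cases h2 : (j:ℕ) = (i:ℕ)
          · rw [if_pos (by omega), if_neg (by omega), if_pos h2]; ring
          · rw [if_neg (by omega), if_neg (by omega), if_neg (by omega)]; ring]
    simp
  set g : Fin (n+1) → Fin (n+1) → ℝ := fun k j => (f (a k - a j)).re with hg
  have hgsym : ∀ k j, g k j = g j k := by
    intro k j
    rw [hg]
    dsimp only
    rw [show a j - a k = -(a k - a j) by ring, hsym]
    exact Complex.conj_re _
  have hgpos : ∀ v : Fin (n+1) → ℝ, 0 ≤ ∑ k, ∑ j, g k j * v k * v j := by
    intro v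
    have h := hf (n+1) a (fun k => (v k : ℂ))
    have h1 := (Complex.le_def.mp h).1
    rw [Complex.zero_re] at h1
    have h2 : (∑ k : Fin (n+1), ∑ j : Fin (n+1),
        f (a k - a j) * (v k : ℂ) * (starRingEnd ℂ) ((v j : ℂ))).re
        = ∑ k, ∑ j, g k j * v k * v j := by
      rw [Complex.re_sum]
      refine Finset.sum_congr rfl fun k _ => ?_
      rw [Complex.re_sum]
      refine Finset.sum_congr rfl fun j _ => ?_
      rw [Complex.conj_ofReal]
      simp [Complex.mul_re, hg]
    rw [h2] at h1
    exact h1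
  set w : Fin n → Fin (n+1) → ℝ := fun i k =>
    (-1 : ℝ)^(i:ℕ) * ((if i.castSucc = k then 1 else 0) + (if i.succ = k then 1 else 0)) with hw
  have husum : ∀ k, (∑ i, w i k)
      = (if (0 : Fin (n+1)) = k then 1 else 0) + (if Fin.last n = k then 1 else 0) := by
    intro k
    induction k using Fin.cases with
    | zero =>
      have h1 : ∀ i : Fin n, w i 0 = if i = 0 then 1 else 0 := by
        intro i
        rw [hw]
        dsimp only
        rw [if_neg (Fin.succ_ne_zero i)]
        have hcs : (i.castSucc = 0) ↔ i = 0 := by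
          rw [Fin.ext_iff, Fin.ext_iff]
          simp
        by_cases h : i = 0
        · rw [if_pos (hcs.mpr h), h]
          norm_num
        · rw [if_neg (fun hh => h (hcs.mp hh)), if_neg h]
          ring
      rw [Finset.sum_congr rfl fun i _ => h1 i, Finset.sum_ite_eq']
      have hne : (0 : Fin (n+1)) ≠ Fin.last n := by
        rw [Fin.ne_iff_vne]
        simp
        omega
      rw [if_pos (Finset.mem_univ _), if_pos rfl, if_neg (Ne.symm hne)]
      norm_num
    | succ j =>
      have hval : ∀ i : Fin n, w i j.succ =
          (if i = j then (-1:ℝ)^(j:ℕ) else 0)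
          + (if i.castSucc = j.succ then (-1:ℝ)^((j:ℕ)+1) else 0) := by
        intro i
        rw [hw]
        dsimp only
        by_cases h : i = j
        · subst h
          have hne2 : ¬ (i.castSucc = i.succ) := (Fin.castSucc_lt_succ : i.castSucc < i.succ).ne
          simp [hne2]
        · rw [if_neg (fun hh => h (Fin.succ_injective n hh)), if_neg h]
          by_cases h2 : i.castSucc = j.succ
          · rw [if_pos h2, if_pos h2]
            have hij : (i:ℕ) = (j:ℕ)+1 := by
              rw [Fin.ext_iff] at h2
              simpa using h2
            rw [hij]
            ring
          · rw [if_neg h2, if_neg h2]; ring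
      rw [Finset.sum_congr rfl fun i _ => hval i, Finset.sum_add_distrib,
        Finset.sum_ite_eq', if_pos (Finset.mem_univ _)]
      have hzero : (0 : Fin (n+1)) ≠ j.succ := (Fin.succ_ne_zero j).symm
      by_cases htop : (j:ℕ) + 1 = n
      · have hlast : Fin.last n = j.succ := by
          rw [Fin.ext_iff]
          simp
          omega
        have hnone : ∀ i : Fin n, i.castSucc ≠ j.succ := by
          intro i hh
          rw [Fin.ext_iff] at hh
          simp at hh
          omega
        rw [Finset.sum_congr rfl fun i _ => if_neg (hnone i), Finset.sum_const_zero]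
        have hje : (-1:ℝ)^(j:ℕ) = 1 := by
          have hev : Even (j:ℕ) := by
            rcases hodd with ⟨m, hm⟩
            exact ⟨m, by omega⟩
          exact hev.neg_one_pow
        rw [hje, if_neg hzero, if_pos hlast]
        norm_num
      · have hlt : (j:ℕ) + 1 < n := by
          have := j.isLt
          omega
        set i0 : Fin n := ⟨(j:ℕ)+1, hlt⟩ with hi0
        have hcond : ∀ i : Fin n, (i.castSucc = j.succ) ↔ i = i0 := by
          intro i
          rw [Fin.ext_iff, Fin.ext_iff]
          simp [hi0]
        rw [Finset.sum_congr rfl fun i _ => if_congr (hcond i) rfl rfl,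
          Finset.sum_ite_eq', if_pos (Finset.mem_univ _)]
        have hlastne : Fin.last n ≠ j.succ := by
          rw [Fin.ne_iff_vne]
          simp
          omega
        rw [if_neg hzero, if_neg hlastne]
        ring
  -- now apply double_sum_bound
  have main := double_sum_bound g hgsym hgpos w
  have hlhs : (∑ k, ∑ j, g k j * (∑ i, w i k) * (∑ i, w i j))
      = 2 * ((f 0).re + (f (∑ k, t k)).re) := by
    rw [Finset.sum_congr rfl fun k _ => Finset.sum_congr rfl fun j _ => by
      rw [husum k, husum j]]
    have expand : ∀ p q r s : Fin (n+1),
        (∑ k : Fin (n+1), ∑ j : Fin (n+1), g k j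
          * ((if p = k then (1:ℝ) else 0) + (if q = k then 1 else 0))
          * ((if r = j then (1:ℝ) else 0) + (if s = j then 1 else 0)))
        = g p r + g p s + g q r + g q s := by
      intro p q r s
      simp only [mul_add, add_mul, mul_ite, ite_mul, mul_one, mul_zero, one_mul, zero_mul,
        Finset.sum_add_distrib, Finset.sum_ite_eq, Finset.mem_univ, if_true]
      ring
    rw [expand 0 (Fin.last n) 0 (Fin.last n)]
    have e1 : g 0 0 = (f 0).re := by rw [hg]; simp
    have e2 : g (Fin.last n) (Fin.last n) = (f 0).re := by rw [hg]; simp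
    have e3 : g 0 (Fin.last n) = (f (∑ k, t k)).re := by
      rw [hg]
      dsimp only
      rw [ha0, halast, zero_sub, hsym]
      exact Complex.conj_re _
    have e4 : g (Fin.last n) 0 = (f (∑ k, t k)).re := by
      rw [hg]
      dsimp only
      rw [ha0, halast, sub_zero]
    rw [e1, e2, e3, e4]
    ring
  have hrhs : ∀ i : Fin n, (∑ k, ∑ j, g k j * w i k * w i j)
      = 2 * ((f 0).re + (f (t i)).re) := by
    intro i
    have hsq : (-1:ℝ)^(i:ℕ) * (-1:ℝ)^(i:ℕ) = 1 := by
      rw [← mul_pow]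
      norm_num
    have step1 : (∑ k, ∑ j, g k j * w i k * w i j)
        = ∑ k : Fin (n+1), ∑ j : Fin (n+1), g k j
          * ((if i.castSucc = k then (1:ℝ) else 0) + (if i.succ = k then 1 else 0))
          * ((if i.castSucc = j then (1:ℝ) else 0) + (if i.succ = j then 1 else 0)) := by
      refine Finset.sum_congr rfl fun k _ => Finset.sum_congr rfl fun j _ => ?_
      rw [hw]
      dsimp only
      rw [show ∀ (G A B : ℝ), G * ((-1:ℝ)^(i:ℕ) * A) * ((-1:ℝ)^(i:ℕ) * B)
          = G * A * B * ((-1:ℝ)^(i:ℕ) * (-1:ℝ)^(i:ℕ)) from fun G A B => by ring,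
        hsq, mul_one]
    have expand : ∀ p q r s : Fin (n+1),
        (∑ k : Fin (n+1), ∑ j : Fin (n+1), g k j
          * ((if p = k then (1:ℝ) else 0) + (if q = k then 1 else 0))
          * ((if r = j then (1:ℝ) else 0) + (if s = j then 1 else 0)))
        = g p r + g p s + g q r + g q s := by
      intro p q r s
      simp only [mul_add, add_mul, mul_ite, ite_mul, mul_one, mul_zero, one_mul, zero_mul,
        Finset.sum_add_distrib, Finset.sum_ite_eq, Finset.mem_univ, if_true]
      ring
    rw [step1, expand i.castSucc i.succ i.castSucc i.succ]
    have e1 : g i.castSucc i.castSucc = (f 0).re := by rw [hg]; simp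
    have e2 : g i.succ i.succ = (f 0).re := by rw [hg]; simp
    have e3 : g i.succ i.castSucc = (f (t i)).re := by
      rw [hg]
      dsimp only
      rw [hstep i]
    have e4 : g i.castSucc i.succ = (f (t i)).re := by
      rw [hgsym, e3]
    rw [e1, e2, e3, e4]
    ring
  rw [hlhs] at main
  rw [Finset.sum_congr rfl fun i (_ : i ∈ Finset.univ) => hrhs i, ← Finset.mul_sum,
    Fintype.card_fin] at main
  linarith [main]

theorem gorin_multipoint_plus (f : ℝ → ℂ) (hc : Continuous f) (hf : IsPosDefFn f)
    (n : ℕ) (hn : 1 ≤ n) (hodd : Odd n) (x y : Fin n → ℝ) :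
    ‖f (∑ k, x k) + f (∑ k, y k)‖ ^ 2 ≤
      2 * n * (f 0).re * ∑ k, ((f 0).re + (f (x k - y k)).re) := by
  -- basic facts
  have h00 : 0 ≤ f 0 := by
    have h := hf 1 ![0] ![1]
    simpa using h
  have h0re : 0 ≤ (f 0).re := by
    have := (Complex.le_def.mp h00).1
    simpa using this
  have h0im : (f 0).im = 0 := by
    have := (Complex.le_def.mp h00).2
    simpa using this.symm
  have hsym : ∀ t : ℝ, f (-t) = (starRingEnd ℂ) (f t) := by
    intro t
    have h1 := hf 2 ![0, t] ![1, 1]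
    have h2 := hf 2 ![0, t] ![1, Complex.I]
    simp [Fin.sum_univ_two, Complex.le_def] at h1 h2
    apply Complex.ext
    · rw [Complex.conj_re]
      nlinarith [h1.1, h1.2, h2.1, h2.2]
    · rw [Complex.conj_im]
      nlinarith [h1.1, h1.2, h2.1, h2.2]
  have hplus : ∀ s : ℝ, 0 ≤ (f 0).re + (f s).re := by
    intro s
    have h1 := hf 2 ![0, s] ![1, 1]
    have h1' := (Complex.le_def.mp h1).1
    simp [Fin.sum_univ_two, hsym s, Complex.add_re, Complex.conj_re] at h1'
    linarith
  set X := ∑ k, x k with hX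
  set Y := ∑ k, y k with hY
  set T := f X + f Y with hT
  set A := T.re ^ 2 + T.im ^ 2 with hA
  set B := (f 0).re + (f (X - Y)).re with hB
  have hq : ∀ r : ℝ, 0 ≤ (f 0).re * (r ^ 2 * A) - 2 * r * A + 2 * B := by
    intro r
    have h := hf 3 ![0, X, Y] ![-(r : ℂ) * T, 1, 1]
    have h1 := (Complex.le_def.mp h).1
    simp only [Fin.sum_univ_three, Matrix.cons_val_zero, Matrix.cons_val_one,
      Matrix.head_cons, Matrix.cons_val_two, Matrix.tail_cons, sub_self, sub_zero,
      zero_sub, Complex.zero_re] at h1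
    rw [hsym X, hsym Y, show Y - X = -(X - Y) by ring, hsym (X - Y)] at h1
    simp only [map_one, mul_one, one_mul, map_mul, map_neg, Complex.conj_conj,
      Complex.conj_ofReal, Complex.add_re, Complex.mul_re, Complex.add_im,
      Complex.mul_im, Complex.neg_re, Complex.neg_im, Complex.ofReal_re,
      Complex.ofReal_im, Complex.conj_re, Complex.conj_im, h0im] at h1
    simp only [hT, Complex.add_re, Complex.add_im] at h1
    rw [hA, hB, hT]
    simp only [Complex.add_re, Complex.add_im]
    exact h1.trans_eq (by ring)
  have hkey := key_lemma f hf hsym n hn hodd (fun k => x k - y k)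
  have hXY : (∑ k, (x k - y k)) = X - Y := by
    rw [hX, hY, Finset.sum_sub_distrib]
  rw [hXY] at hkey
  set S := ∑ k, ((f 0).re + (f (x k - y k)).re) with hS
  have hkey' : B ≤ (n : ℝ) * S := hkey
  have hBpos : 0 ≤ B := hplus (X - Y)
  have habs : ‖f X + f Y‖ ^ 2 = A := by
    rw [Complex.sq_norm, Complex.normSq_apply, hA]
    ring
  have hA0 : 0 ≤ A := by
    rw [hA]
    positivity
  rw [habs]
  by_cases hf0 : (f 0).re = 0
  · have hAle : A ≤ 0 := by
      by_contra hA1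
      push_neg at hA1
      have h := hq ((2 * B + 1) / A)
      rw [hf0] at h
      have hdiv : (2 * B + 1) / A * A = 2 * B + 1 := div_mul_cancel₀ _ (ne_of_gt hA1)
      nlinarith [h, hdiv, hBpos]
    rw [hf0]
    have : (0:ℝ) ≤ (n : ℝ) * S := le_trans hBpos hkey'
    nlinarith [hAle, this]
  · have hf0' : 0 < (f 0).re := lt_of_le_of_ne h0re (Ne.symm hf0)
    have h := hq (1 / (f 0).re)
    have key2 : A ≤ 2 * (f 0).re * B := by
      have hne : (f 0).re ≠ 0 := ne_of_gt hf0'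
      have h2 : 0 ≤ ((f 0).re * ((1 / (f 0).re) ^ 2 * A)
          - 2 * (1 / (f 0).re) * A + 2 * B) * (f 0).re := mul_nonneg h hf0'.le
      have heq : ((f 0).re * ((1 / (f 0).re) ^ 2 * A)
          - 2 * (1 / (f 0).re) * A + 2 * B) * (f 0).re = -A + 2 * B * (f 0).re := by
        field_simp
        ring
      rw [heq] at h2
      linarith
    have key3 : 2 * (f 0).re * B ≤ 2 * (f 0).re * ((n : ℝ) * S) := by
      apply mul_le_mul_of_nonneg_left hkey'
      positivity
    calc A ≤ 2 * (f 0).re * ((n : ℝ) * S) := le_trans key2 key3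
      _ = 2 * (n : ℝ) * (f 0).re * S := by ring
end

section
/- There exist two continuous positive definite functions f, g : ℝ → ℝ that coincide on the interval [−1, 1] but do not coincide on all of ℝ. Concretely, f(x) = max(2 − |x|, 0) and g(x) = 1 + max(1 − |x|, 0) are both positive definite, f = g on [−1,1], yet f ≠ g (e.g. f(2) = 0 ≠ 1 = g(2)). -/
open Complex ComplexOrder Finset MeasureTheory

lemma complex_integral_ofReal (f : ℝ → ℝ) :
    ∫ t, ((f t : ℝ) : ℂ) = ((∫ t, f t : ℝ) : ℂ) := integral_ofReal

lemma min_sub_max (b c a : ℝ) : min (b+a) (c+a) - max b c = a - |b - c| := by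
  rcases le_total b c with h | h
  · rw [_root_.abs_of_nonpos (by linarith), min_eq_left (by linarith), max_eq_right h]; ring
  · rw [_root_.abs_of_nonneg (by linarith), min_eq_right (by linarith), max_eq_left h]; ring

lemma integral_ind_inter (b c a : ℝ) :
    ∫ t, ((Set.Ioc b (b+a)) ∩ (Set.Ioc c (c+a))).indicator (fun _ => (1:ℝ)) t
      = max (a - |b - c|) 0 := by
  rw [MeasureTheory.integral_indicator_const (1:ℝ)
      ((measurableSet_Ioc.inter measurableSet_Ioc)), smul_eq_mul, mul_one,
    Set.Ioc_inter_Ioc, measureReal_def, Real.volume_Ioc]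
  rcases le_total (a - |b - c|) 0 with h | h
  · rw [max_eq_right h, ENNReal.toReal_eq_zero_iff]
    left
    rw [ENNReal.ofReal_eq_zero, min_sub_max]; exact h
  · rw [max_eq_left h, ENNReal.toReal_ofReal (by rw [min_sub_max]; exact h), min_sub_max]

lemma tent_posdef (a : ℝ) : IsPosDefFnR (fun x => max (a - |x|) 0) := by
  intro N x z
  set I : Fin N → Set ℝ := fun k => Set.Ioc (x k) (x k + a) with hI
  have hIm : ∀ k, MeasurableSet (I k) := fun k => measurableSet_Ioc
  set g : Fin N → Fin N → ℝ → ℂ := fun k j t =>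
    (z k * (starRingEnd ℂ) (z j)) * (((I k ∩ I j).indicator (fun _ => (1:ℝ)) t : ℝ) : ℂ)
    with hg
  have hgint : ∀ k j, Integrable (g k j) := by
    intro k j
    apply Integrable.const_mul
    have : (fun t => (((I k ∩ I j).indicator (fun _ => (1:ℝ)) t : ℝ) : ℂ))
        = (I k ∩ I j).indicator (fun _ => (1:ℂ)) := by
      funext t; by_cases h : t ∈ I k ∩ I j <;> simp [h]
    rw [this, integrable_indicator_iff ((hIm k).inter (hIm j))]
    refine integrableOn_const ?_
    apply lt_top_iff_ne_top.1
    exact lt_of_le_of_lt (measure_mono Set.inter_subset_left)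
      (by rw [hI]; simp only; rw [Real.volume_Ioc]; exact ENNReal.ofReal_lt_top)
  have hterm : ∀ k j : Fin N, ((max (a - |x k - x j|) 0 : ℝ) : ℂ) * z k * (starRingEnd ℂ) (z j)
      = ∫ t, g k j t := by
    intro k j
    rw [hg]
    simp only
    rw [MeasureTheory.integral_const_mul]
    have : ∫ t, (((I k ∩ I j).indicator (fun _ => (1:ℝ)) t : ℝ) : ℂ)
        = ((max (a - |x k - x j|) 0 : ℝ) : ℂ) := by
      rw [complex_integral_ofReal]
      norm_cast
      rw [hI]
      simp only
      exact integral_ind_inter (x k) (x j) a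
    rw [this]; ring
  simp only [hterm]
  have h1 : ∑ k : Fin N, ∑ j : Fin N, ∫ t, g k j t = ∫ t, ∑ k : Fin N, ∑ j : Fin N, g k j t := by
    rw [MeasureTheory.integral_finset_sum _
      (fun k _ => integrable_finset_sum _ (fun j _ => hgint k j))]
    exact Finset.sum_congr rfl fun k _ => (integral_finset_sum _ (fun j _ => hgint k j)).symm
  rw [h1]
  have h2 : ∀ t, ∑ k : Fin N, ∑ j : Fin N, g k j t
      = ((normSq (∑ k : Fin N, z k * (((I k).indicator (fun _ => (1:ℝ)) t : ℝ) : ℂ)) : ℝ) : ℂ) := by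
    intro t
    rw [← Complex.mul_conj, map_sum, Finset.sum_mul_sum]
    refine Finset.sum_congr rfl fun k _ => Finset.sum_congr rfl fun j _ => ?_
    simp only [hg, map_mul, Complex.conj_ofReal]
    by_cases h1 : t ∈ I k <;> by_cases h2 : t ∈ I j <;>
      simp [Set.indicator_of_mem, Set.indicator_of_notMem, h1, h2, Set.mem_inter_iff] <;> ring
  simp only [h2]
  rw [complex_integral_ofReal]
  exact Complex.zero_le_real.2 (integral_nonneg fun t => normSq_nonneg _)

lemma add_posdef {u v : ℝ → ℝ} (hu : IsPosDefFnR u) (hv : IsPosDefFnR v) :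
    IsPosDefFnR (fun x => u x + v x) := by
  intro N x z
  have := add_nonneg (hu N x z) (hv N x z)
  convert this using 1
  rw [← Finset.sum_add_distrib]
  refine Finset.sum_congr rfl fun k _ => ?_
  rw [← Finset.sum_add_distrib]
  refine Finset.sum_congr rfl fun j _ => ?_
  push_cast
  ring

lemma const_posdef : IsPosDefFnR (fun _ => (1:ℝ)) := by
  intro N x z
  have : ∑ k : Fin N, ∑ j : Fin N, ((1:ℝ) : ℂ) * z k * (starRingEnd ℂ) (z j)
      = ((normSq (∑ k : Fin N, z k) : ℝ) : ℂ) := by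
    rw [← Complex.mul_conj, map_sum, Finset.sum_mul_sum]
    refine Finset.sum_congr rfl fun k _ => Finset.sum_congr rfl fun j _ => ?_
    push_cast; ring
  rw [this]
  exact Complex.zero_le_real.2 (normSq_nonneg _)

theorem tent_nonuniqueness :
    Continuous (fun x : ℝ => max (2 - |x|) 0) ∧
    Continuous (fun x : ℝ => 1 + max (1 - |x|) 0) ∧
    IsPosDefFnR (fun x : ℝ => max (2 - |x|) 0) ∧
    IsPosDefFnR (fun x : ℝ => 1 + max (1 - |x|) 0) ∧
    (∀ x ∈ Set.Icc (-1 : ℝ) 1,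
      max (2 - |x|) 0 = 1 + max (1 - |x|) 0) ∧
    (fun x : ℝ => max (2 - |x|) 0) ≠ (fun x : ℝ => 1 + max (1 - |x|) 0) := by
  refine ⟨?_, ?_, tent_posdef 2, add_posdef const_posdef (tent_posdef 1), ?_, ?_⟩
  · exact ((continuous_const.sub _root_.continuous_abs).max continuous_const)
  · exact continuous_const.add ((continuous_const.sub _root_.continuous_abs).max continuous_const)
  · intro y hy
    obtain ⟨h1, h2⟩ := hy
    have hay : |y| ≤ 1 := abs_le.2 ⟨h1, h2⟩
    rw [max_eq_left (by linarith), max_eq_left (by linarith)]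
    push_cast; ring
  · intro h
    have := congrFun h 2
    norm_num at this
end
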